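/- Suppose glueing two simplicial d-polytopes P_1 # P_2 along facets F_1, F_2 identifies their boundaries minus the open facets. If a facet F'_1 of P_1 is at dual-graph distance δ_1 from F_1 and a facet F'_2 of P_2 is at distance δ_2 from F_2, then in the dual graph of the glued complex the distance from F'_1 to F'_2 is at least δ_1 + δ_2 − 1. Abstractly: if G is a graph formed from graphs G_1, G_2 by deleting a vertex f_1 from G_1 and f_2 from G_2 and adding edges only between former neighbors of f_1 and former neighbors of f_2, then d_G(x,y) ≥ d_{G_1}(x,f_1) + d_{G_2}(y,f_2) − 1 for x in G_1 and y in G_2. -/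

import Mathlib

/-!
The function equal to `d_{G₁}(·, f₁)` on the first part and to `1 - d_{G₂}(·, f₂)` on the
second part changes by at most one along every edge of `G`: on each part this is the triangle
inequality, and a crossing edge joins a vertex where it is `1` to one where it is `0`.
Comparing its values at `x` and `y` along a shortest walk gives the bound.
-/

namespace SimpleGraph

variable {V : Type*} {G : SimpleGraph V}

lemma Adj.dist_le_dist_add_one {u v : V} (h : G.Adj u v) (w : V) :
    G.dist u w ≤ G.dist v w + 1 := by
  simpa [dist_eq_one_iff_adj.mpr h, add_comm] using h.reachable.dist_triangle_left w

lemma Walk.apply_le_apply_add_length {f : V → ℤ} (hf : ∀ u v, G.Adj u v → f u ≤ f v + 1)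
    {u v : V} (p : G.Walk u v) : f u ≤ f v + p.length := by
  induction p with
  | nil => simp
  | cons h _ ih =>
    rw [Walk.length_cons, Nat.cast_succ]
    linarith [hf _ _ h]

lemma Reachable.apply_le_apply_add_dist {f : V → ℤ} (hf : ∀ u v, G.Adj u v → f u ≤ f v + 1)
    {u v : V} (h : G.Reachable u v) : f u ≤ f v + G.dist u v := by
  obtain ⟨p, hp⟩ := h.exists_walk_length_eq_dist
  exact hp ▸ p.apply_le_apply_add_length hf

end SimpleGraph

open SimpleGraph

/-- The abstract dual-graph version of glueing two simplicial polytopes along a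
facet: let `G` be a graph on the disjoint union of `G₁` minus the vertex `f₁` and
`G₂` minus the vertex `f₂`, which restricts to `G₁` (resp. `G₂`) on each part and
whose crossing edges only join former neighbors of `f₁` to former neighbors of
`f₂`.  Then for `x` in the first part and `y` in the second,
`d_G(x, y) ≥ d_{G₁}(x, f₁) + d_{G₂}(y, f₂) − 1`. -/
theorem stmt_15 {V₁ V₂ : Type*} (G₁ : SimpleGraph V₁) (G₂ : SimpleGraph V₂)
    (f₁ : V₁) (f₂ : V₂)
    (G : SimpleGraph ({x : V₁ // x ≠ f₁} ⊕ {y : V₂ // y ≠ f₂}))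
    (hleft : ∀ a b : {x : V₁ // x ≠ f₁},
      G.Adj (Sum.inl a) (Sum.inl b) ↔ G₁.Adj a b)
    (hright : ∀ a b : {y : V₂ // y ≠ f₂},
      G.Adj (Sum.inr a) (Sum.inr b) ↔ G₂.Adj a b)
    (hcross : ∀ (a : {x : V₁ // x ≠ f₁}) (b : {y : V₂ // y ≠ f₂}),
      G.Adj (Sum.inl a) (Sum.inr b) → G₁.Adj a f₁ ∧ G₂.Adj b f₂) :
    ∀ (x : {x : V₁ // x ≠ f₁}) (y : {y : V₂ // y ≠ f₂}),
      G.Reachable (Sum.inl x) (Sum.inr y) →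
      G₁.dist x f₁ + G₂.dist y f₂ ≤ G.dist (Sum.inl x) (Sum.inr y) + 1 := by
  intro x y hxy
  let φ : {x : V₁ // x ≠ f₁} ⊕ {y : V₂ // y ≠ f₂} → ℤ :=
    Sum.elim (fun a ↦ G₁.dist a f₁) (fun b ↦ 1 - G₂.dist b f₂)
  have hφ : ∀ u v, G.Adj u v → φ u ≤ φ v + 1 := by
    rintro (a | b) (a' | b') huv
    · have := ((hleft a a').mp huv).dist_le_dist_add_one f₁
      simp only [φ, Sum.elim_inl]
      omega
    · simp [φ, dist_eq_one_iff_adj.mpr (hcross a b' huv).1,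
        dist_eq_one_iff_adj.mpr (hcross a b' huv).2]
    · simp only [φ, Sum.elim_inl, Sum.elim_inr, dist_eq_one_iff_adj.mpr (hcross a' b huv.symm).2]
      omega
    · have := ((hright b' b).mp huv.symm).dist_le_dist_add_one f₂
      simp only [φ, Sum.elim_inr]
      omega
  have := hxy.apply_le_apply_add_dist hφ
  simp only [φ, Sum.elim_inl, Sum.elim_inr] at this
  omega
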